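/- Let R be a commutative ring, 𝔗 a half centered torsion theory over R, 𝔞 a finitely generated ideal of R, and M an R-module. Then 𝔗-Kgrade_R(𝔞,M) = inf{ Kgrade_{R_𝔭}(𝔞R_𝔭, M_𝔭) : 𝔭 ∈ 𝔗-Supp_R(M) }, where Kgrade denotes the classical Koszul grade (i.e., the grade with respect to the trivial torsion theory {0}) over the localization R_𝔭. -/

import Mathlib

open CategoryTheory

universe u

noncomputable section

/-- A torsion theory over `R`: a class of `R`-modules closed under isomorphism, submodules,
quotient modules, extensions, and directed colimits (formulated as closure under directed
unions of submodules). -/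
structure IsTorsionTheory (R : Type u) [CommRing R] (T : Set (ModuleCat.{u} R)) : Prop where
  mem_of_iso : ∀ {N N' : ModuleCat.{u} R}, (N ≅ N') → N ∈ T → N' ∈ T
  submodule_mem : ∀ {N : ModuleCat.{u} R}, N ∈ T → ∀ S : Submodule R N,
    ModuleCat.of R S ∈ T
  quotient_mem : ∀ {N : ModuleCat.{u} R}, N ∈ T → ∀ S : Submodule R N,
    ModuleCat.of R (N ⧸ S) ∈ T
  ext_mem : ∀ {N : ModuleCat.{u} R} (S : Submodule R N),
    ModuleCat.of R S ∈ T → ModuleCat.of R (N ⧸ S) ∈ T → N ∈ T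
  directed_mem : ∀ {N : ModuleCat.{u} R} {ι : Type u} [Nonempty ι] (S : ι → Submodule R N),
    Directed (· ≤ ·) S → (∀ i, ModuleCat.of R (S i) ∈ T) → iSup S = ⊤ → N ∈ T

variable {R : Type u} [CommRing R]

/-- The "outgoing" differential of the Koszul cocomplex `Hom_R(K_•(x), M)`, whose degree `i`
component is indexed by the `i`-element subsets of `{1, …, r}`. -/
def koszulDiff {r : ℕ} (x : Fin r → R) (M : Type u) [AddCommGroup M] [Module R M] (i : ℕ) :
    ({s : Finset (Fin r) // s.card = i} → M) →ₗ[R]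
      ({s : Finset (Fin r) // s.card = i + 1} → M) where
  toFun φ t := ∑ j ∈ t.1.attach,
    ((-1 : R) ^ (t.1.filter (fun k => k < j.1)).card * x j.1) •
      φ ⟨t.1.erase j.1, by simp [Finset.card_erase_of_mem j.2, t.2]⟩
  map_add' φ ψ := by
    funext t
    simp [Finset.sum_add_distrib, smul_add]
  map_smul' c φ := by
    funext t
    simp [Finset.smul_sum, smul_comm c]

/-- The "incoming" differential of the Koszul cocomplex in degree `i`
(its source is trivial when `i = 0`). -/
def koszulDiffIn {r : ℕ} (x : Fin r → R) (M : Type u) [AddCommGroup M] [Module R M] (i : ℕ) :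
    ({s : Finset (Fin r) // s.card + 1 = i} → M) →ₗ[R]
      ({s : Finset (Fin r) // s.card = i} → M) where
  toFun φ t := ∑ j ∈ t.1.attach,
    ((-1 : R) ^ (t.1.filter (fun k => k < j.1)).card * x j.1) •
      φ ⟨t.1.erase j.1, by rw [Finset.card_erase_add_one j.2]; exact t.2⟩
  map_add' φ ψ := by
    funext t
    simp [Finset.sum_add_distrib, smul_add]
  map_smul' c φ := by
    funext t
    simp [Finset.smul_sum, smul_comm c]

/-- The `i`-th Koszul cohomology `H^i(x; M)` of `M` with respect to `x₁, …, x_r`, i.e. the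
`i`-th cohomology of the cocomplex `Hom_R(K_•(x), M)`. -/
abbrev koszulCohomology {r : ℕ} (x : Fin r → R) (M : Type u) [AddCommGroup M] [Module R M]
    (i : ℕ) : Type u :=
  ↥(LinearMap.ker (koszulDiff x M i)) ⧸
    (Submodule.comap (LinearMap.ker (koszulDiff x M i)).subtype
      (LinearMap.range (koszulDiffIn x M i)))

/-- The `𝔗`-Koszul grade of the ideal `(x₁, …, x_r)` on `M`: the infimum of the set of `i`
such that `H^i(x; M) ∉ 𝔗` (with `inf ∅ = +∞`). -/
def TKgrade (T : Set (ModuleCat.{u} R)) {r : ℕ} (x : Fin r → R) (M : Type u)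
    [AddCommGroup M] [Module R M] : ℕ∞ :=
  sInf ((↑· : ℕ → ℕ∞) '' {i | ModuleCat.of R (koszulCohomology x M i) ∉ T})

/-- A torsion theory `𝔗` is half centered if every module `N` such that `R/𝔭 ∈ 𝔗` for all
primes `𝔭` in the support of `N` itself belongs to `𝔗`. -/
def IsHalfCentered {R : Type u} [CommRing R] (T : Set (ModuleCat.{u} R)) : Prop :=
  ∀ N : ModuleCat.{u} R,
    (∀ p ∈ Module.support R N, ModuleCat.of R (R ⧸ p.asIdeal) ∈ T) → N ∈ T

/-! A half centered torsion theory is detected by supports: `N ∉ 𝔗` iff some `𝔭 ∈ Supp N` has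
`R/𝔭 ∉ 𝔗`, the converse because `R/𝔭` is a quotient of `R ∙ m ≅ R/ann(m) ⊆ N` for an `m` with
`ann(m) ⊆ 𝔭`. Localization commutes with kernels and images, so `𝔭 ∈ Supp H^i(x; M)` iff
`H^i(x_𝔭; M_𝔭) ≠ 0`, and such `𝔭` lie in `Supp M`. Hence `H^i(x; M) ∉ 𝔗` iff `H^i(x_𝔭; M_𝔭) ≠ 0`
for some `𝔭 ∈ 𝔗-Supp M`, and an infimum over a union is the infimum of the infima. -/

theorem Submodule.nontrivial_quotient_comap_subtype_iff {R M : Type*} [Ring R] [AddCommGroup M]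
    [Module R M] (N P : Submodule R M) :
    Nontrivial (N ⧸ P.comap N.subtype) ↔ ∃ z ∈ N, z ∉ P := by
  rw [Submodule.Quotient.nontrivial_iff, ne_eq, Submodule.comap_subtype_eq_top,
    SetLike.not_le_iff_exists]

theorem Submodule.mem_support_quotient_comap_subtype_iff {R M : Type*} [CommRing R]
    [AddCommGroup M] [Module R M] (N P : Submodule R M) (p : PrimeSpectrum R) :
    p ∈ Module.support R (N ⧸ P.comap N.subtype) ↔
      ∃ z ∈ N, ∀ s ∈ p.asIdeal.primeCompl, s • z ∉ P := by
  simp only [Module.mem_support_iff', (Submodule.Quotient.mk_surjective _).exists, ne_eq,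
    ← Submodule.Quotient.mk_smul, Submodule.Quotient.mk_eq_zero, Submodule.mem_comap,
    Subtype.exists, Submodule.subtype_apply, Submodule.coe_smul, exists_prop]
  rfl

open IsLocalizedModule in
theorem IsLocalizedModule.exists_mem_ker_notMem_range_iff {R : Type*} [CommRing R]
    (S : Submonoid R) {A B C A' B' C' : Type*}
    [AddCommGroup A] [Module R A] [AddCommGroup B] [Module R B] [AddCommGroup C] [Module R C]
    [AddCommGroup A'] [Module R A'] [AddCommGroup B'] [Module R B'] [AddCommGroup C'] [Module R C']
    (lA : A →ₗ[R] A') (lB : B →ₗ[R] B') (lC : C →ₗ[R] C')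
    [IsLocalizedModule S lA] [IsLocalizedModule S lB] [IsLocalizedModule S lC]
    {f : A →ₗ[R] B} {g : B →ₗ[R] C} {f' : A' →ₗ[R] B'} {g' : B' →ₗ[R] C'}
    (hf : f' ∘ₗ lA = lB ∘ₗ f) (hg : g' ∘ₗ lB = lC ∘ₗ g) :
    (∃ z' ∈ LinearMap.ker g', z' ∉ LinearMap.range f') ↔
      ∃ z ∈ LinearMap.ker g, ∀ s ∈ S, s • z ∉ LinearMap.range f := by
  obtain rfl : f' = map S lA lB f := linearMap_ext S lA lB (hf.trans (map_comp S lA lB f).symm)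
  obtain rfl : g' = map S lB lC g := linearMap_ext S lB lC (hg.trans (map_comp S lB lC g).symm)
  rw [LinearMap.ker_localizedMap_eq_localized₀_ker,
    LinearMap.range_localizedMap_eq_localized₀_range]
  constructor
  · rintro ⟨_, ⟨z, hz, s, rfl⟩, hnot⟩
    exact ⟨z, hz, fun t ht hmem => hnot ⟨t • z, hmem, ⟨t, ht⟩ * s, mk'_cancel_left lB z ⟨t, ht⟩ s⟩⟩
  · rintro ⟨z, hz, hnot⟩
    refine ⟨lB z, ⟨z, hz, 1, mk'_one S lB z⟩, fun ⟨w, hw, t, e⟩ => ?_⟩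
    rw [← mk'_one S lB z, mk'_eq_mk'_iff] at e
    obtain ⟨u, hu⟩ := e
    have hmem : u • t • z ∈ LinearMap.range f := hu ▸ Submodule.smul_of_tower_mem _ u (by simpa)
    exact hnot (u * t) (u * t).2 (by simpa [Submonoid.smul_def, mul_smul] using hmem)

theorem sInf_image_setOf_exists {α ι κ : Type*} [CompleteLattice α] (f : ι → α) (P : Set κ)
    (Q : κ → ι → Prop) :
    sInf (f '' {i | ∃ p ∈ P, Q p i}) = sInf ((fun p => sInf (f '' {i | Q p i})) '' P) := by
  simp only [sInf_image, Set.mem_ofPred_eq, iInf_exists, iInf_and]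
  rw [iInf_comm]
  exact iInf_congr fun _ => iInf_comm

theorem IsTorsionTheory.quotient_mem_of_mem_support {T : Set (ModuleCat.{u} R)}
    (hT : IsTorsionTheory R T) {N : Type u} [AddCommGroup N] [Module R N]
    (hN : ModuleCat.of R N ∈ T) {p : PrimeSpectrum R} (hp : p ∈ Module.support R N) :
    ModuleCat.of R (R ⧸ p.asIdeal) ∈ T := by
  obtain ⟨m, hm⟩ := Module.mem_support_iff'.mp hp
  have hle : Ideal.torsionOf R N m ≤ p.asIdeal := fun c hc => by
    by_contra hcp
    exact hm c hcp ((Ideal.mem_torsionOf_iff m c).mp hc)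
  have hspan : ModuleCat.of R (R ⧸ Ideal.torsionOf R N m) ∈ T :=
    hT.mem_of_iso (Ideal.quotTorsionOfEquivSpanSingleton R N m).symm.toModuleIso
      (hT.submodule_mem hN (R ∙ m))
  exact hT.mem_of_iso
    (Submodule.quotientQuotientEquivQuotient (Ideal.torsionOf R N m) p.asIdeal hle).toModuleIso
    (hT.quotient_mem hspan _)

theorem IsTorsionTheory.notMem_iff_exists_mem_support {T : Set (ModuleCat.{u} R)}
    (hT : IsTorsionTheory R T) (hHC : IsHalfCentered T) (N : Type u) [AddCommGroup N]
    [Module R N] :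
    ModuleCat.of R N ∉ T ↔ ∃ p ∈ Module.support R N, ModuleCat.of R (R ⧸ p.asIdeal) ∉ T := by
  refine ⟨fun hN => ?_, fun ⟨p, hp, hRp⟩ hN => hRp (hT.quotient_mem_of_mem_support hN hp)⟩
  by_contra! h
  exact hN (hHC (ModuleCat.of R N) h)

theorem nontrivial_of_nontrivial_koszulCohomology {r : ℕ} {x : Fin r → R} {M : Type u}
    [AddCommGroup M] [Module R M] {i : ℕ}
    (h : Nontrivial (koszulCohomology x M i)) : Nontrivial M := by
  by_contra hM
  have := not_nontrivial_iff_subsingleton.mp hM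
  exact not_nontrivial _ h

abbrev LocalizedModule.piMkLinearMap (S : Submonoid R) (M : Type u) [AddCommGroup M] [Module R M]
    (ι : Type*) : (ι → M) →ₗ[R] (ι → LocalizedModule S M) :=
  .pi fun t => LocalizedModule.mkLinearMap S M ∘ₗ .proj t

section KoszulLocalization

variable (S : Submonoid R) {M : Type u} [AddCommGroup M] [Module R M] {r : ℕ} (x : Fin r → R)

open LocalizedModule

theorem koszulDiff_localization_comp (i : ℕ) :
    (koszulDiff (fun j => algebraMap R (Localization S) (x j)) (LocalizedModule S M) i
      ).restrictScalars R ∘ₗ piMkLinearMap S M _ = piMkLinearMap S M _ ∘ₗ koszulDiff x M i := by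
  refine LinearMap.ext fun φ => funext fun t => ?_
  simp only [koszulDiff, LinearMap.coe_comp, Function.comp_apply, LinearMap.coe_restrictScalars,
    LinearMap.pi_apply, LinearMap.coe_mk, AddHom.coe_mk, LinearMap.coe_proj, Function.eval,
    map_sum, map_smul]
  refine Finset.sum_congr rfl fun j _ => ?_
  rw [← algebraMap_smul (Localization S) (_ * x j.1), map_mul, map_pow, map_neg, map_one]

theorem koszulDiffIn_localization_comp (i : ℕ) :
    (koszulDiffIn (fun j => algebraMap R (Localization S) (x j)) (LocalizedModule S M) i
      ).restrictScalars R ∘ₗ piMkLinearMap S M _ = piMkLinearMap S M _ ∘ₗ koszulDiffIn x M i := by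
  refine LinearMap.ext fun φ => funext fun t => ?_
  simp only [koszulDiffIn, LinearMap.coe_comp, Function.comp_apply, LinearMap.coe_restrictScalars,
    LinearMap.pi_apply, LinearMap.coe_mk, AddHom.coe_mk, LinearMap.coe_proj, Function.eval,
    map_sum, map_smul]
  refine Finset.sum_congr rfl fun j _ => ?_
  rw [← algebraMap_smul (Localization S) (_ * x j.1), map_mul, map_pow, map_neg, map_one]

theorem nontrivial_koszulCohomology_localization_iff (i : ℕ) :
    Nontrivial (koszulCohomology (fun j => algebraMap R (Localization S) (x j))
        (LocalizedModule S M) i) ↔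
      ∃ z ∈ LinearMap.ker (koszulDiff x M i),
        ∀ s ∈ S, s • z ∉ LinearMap.range (koszulDiffIn x M i) := by
  rw [Submodule.nontrivial_quotient_comap_subtype_iff]
  exact IsLocalizedModule.exists_mem_ker_notMem_range_iff S (piMkLinearMap S M _)
    (piMkLinearMap S M _) (piMkLinearMap S M _) (koszulDiffIn_localization_comp S x i)
    (koszulDiff_localization_comp S x i)

theorem nontrivial_koszulCohomology_localization_iff_mem_support (p : PrimeSpectrum R) (i : ℕ) :
    Nontrivial (koszulCohomology (fun j => algebraMap R (Localization p.asIdeal.primeCompl) (x j))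
        (LocalizedModule p.asIdeal.primeCompl M) i) ↔
      p ∈ Module.support R (koszulCohomology x M i) := by
  rw [nontrivial_koszulCohomology_localization_iff,
    Submodule.mem_support_quotient_comap_subtype_iff]

end KoszulLocalization

theorem tKgrade_eq_sInf_localized_kGrade (T : Set (ModuleCat.{u} R))
    (hT : IsTorsionTheory R T) (hHC : IsHalfCentered T)
    (M : Type u) [AddCommGroup M] [Module R M]
    {r : ℕ} (x : Fin r → R) :
    TKgrade T x M = sInf ((fun p : PrimeSpectrum R =>
        sInf ((↑· : ℕ → ℕ∞) '' {i | Nontrivial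
          (koszulCohomology
            (fun j => algebraMap R (Localization p.asIdeal.primeCompl) (x j))
            (LocalizedModule p.asIdeal.primeCompl M) i)})) ''
      {p : PrimeSpectrum R | p ∈ Module.support R M ∧
        ModuleCat.of R (R ⧸ p.asIdeal) ∉ T}) := by
  rw [TKgrade, ← sInf_image_setOf_exists]
  congr 2
  ext i
  rw [Set.mem_ofPred_eq, Set.mem_ofPred_eq, hT.notMem_iff_exists_mem_support hHC]
  refine exists_congr fun p => ⟨fun ⟨hp, hRp⟩ => ?_, fun ⟨⟨_, hRp⟩, hnt⟩ => ?_⟩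
  · have hnt := (nontrivial_koszulCohomology_localization_iff_mem_support x p i).mpr hp
    exact ⟨⟨Module.mem_support_iff.mpr (nontrivial_of_nontrivial_koszulCohomology hnt), hRp⟩, hnt⟩
  · exact ⟨(nontrivial_koszulCohomology_localization_iff_mem_support x p i).mp hnt, hRp⟩
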